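/- Let U : ℝ → ℝ^N be absolutely continuous with U_x ∈ L², satisfying U(x) → a⁻ as x → -∞ and U(x) → a⁺ as x → +∞. Assume W : ℝ^N → ℝ is continuous, nonnegative, and let α > 0 be such that the sublevel set {W ≤ α} is the disjoint union of two sets K⁻ ∋ a⁻ and K⁺ ∋ a⁺ with d_α := dist(K⁻, K⁺) > 0. Suppose Λ^α := {x : W(U(x)) ≥ α} is a bounded interval [λ⁻, λ⁺]. Then E(U) = ∫_ℝ { ½|U_x|² + W(U) } dx ≥ d_α²/(2(λ⁺ - λ⁻)) + α(λ⁺ - λ⁻). -/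

import Mathlib

/-!
Outside `[λ⁻, λ⁺]` the curve stays in the sublevel set `{W ≤ α} = K⁻ ∪ K⁺`, whose two parts are a
positive distance apart. By connectedness each closed half-line is mapped into a single part, the one
containing the limit at its end, so `U λ⁻ ∈ K⁻`, `U λ⁺ ∈ K⁺` and `|U λ⁺ - U λ⁻| ≥ d_α`. On
`[λ⁻, λ⁺]` the fundamental theorem of calculus and Cauchy–Schwarz (Jensen for `x ↦ x²`) turn this
into `∫ |U_x|² ≥ d_α² / (λ⁺ - λ⁻)`, while `W(U) ≥ α` there.
-/

open MeasureTheory Filter Set Topology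

theorem IsPreconnected.subset_or_subset_of_le_dist {X : Type*} [PseudoMetricSpace X]
    {s A B : Set X} {d : ℝ} (hs : IsPreconnected s) (hd : 0 < d)
    (hAB : ∀ x ∈ A, ∀ y ∈ B, d ≤ dist x y) (hsAB : s ⊆ A ∪ B) : s ⊆ A ∨ s ⊆ B := by
  have hdisj : Disjoint (Metric.thickening (d / 2) A) (Metric.thickening (d / 2) B) := by
    refine disjoint_left.2 fun z hzA hzB => ?_
    obtain ⟨x, hx, hzx⟩ := Metric.mem_thickening_iff.1 hzA
    obtain ⟨y, hy, hzy⟩ := Metric.mem_thickening_iff.1 hzB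
    linarith [hAB x hx y hy, dist_triangle_left x y z]
  have hA := Metric.self_subset_thickening (half_pos hd) A
  have hB := Metric.self_subset_thickening (half_pos hd) B
  rcases hs.subset_or_subset Metric.isOpen_thickening Metric.isOpen_thickening hdisj
    (hsAB.trans (union_subset_union hA hB)) with h | h
  · exact .inl fun z hz => (hsAB hz).resolve_right fun hzB => hdisj.ne_of_mem (h hz) (hB hzB) rfl
  · exact .inr fun z hz => (hsAB hz).resolve_left fun hzA => hdisj.ne_of_mem (hA hzA) (h hz) rfl

theorem IsPreconnected.mapsTo_of_tendsto {α X : Type*} [TopologicalSpace α] [PseudoMetricSpace X]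
    {f : α → X} {s : Set α} {l : Filter α} [l.NeBot] {A B : Set X} {d : ℝ} {a : X}
    (hs : IsPreconnected s) (hf : ContinuousOn f s) (hd : 0 < d)
    (hAB : ∀ x ∈ A, ∀ y ∈ B, d ≤ dist x y) (hsAB : MapsTo f s (A ∪ B)) (hsl : s ∈ l)
    (hlim : Tendsto f l (𝓝 a)) (ha : a ∈ A) : MapsTo f s A := by
  refine ((hs.image f hf).subset_or_subset_of_le_dist hd hAB hsAB.image_subset).elim
    image_subset_iff.1 fun hB => ?_
  have haB : a ∈ closure B :=
    mem_closure_of_tendsto hlim (mem_of_superset hsl fun x hx => hB ⟨x, hx, rfl⟩)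
  obtain ⟨b, hb, hab⟩ := Metric.mem_closure_iff.1 haB d hd
  exact absurd (hAB a ha b hb) (not_le.2 hab)

theorem compl_Ioo_subset_of_setOf_le_eq_Icc {g : ℝ → ℝ} (hg : Continuous g) {c a b : ℝ}
    (h : {x | c ≤ g x} = Icc a b) : (Ioo a b)ᶜ ⊆ {x | g x ≤ c} := by
  rw [← interior_Icc, ← closure_compl, (isClosed_le hg continuous_const).closure_subset_iff, ← h]
  exact fun x (hx : ¬c ≤ g x) => (not_le.1 hx).le

theorem sq_setIntegral_le_measureReal_mul {α : Type*} [MeasurableSpace α] {μ : Measure α}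
    {s : Set α} {f : α → ℝ} (hs : μ s ≠ ⊤) (hf : IntegrableOn f s μ)
    (hf2 : IntegrableOn (fun x => f x ^ 2) s μ) :
    (∫ x in s, f x ∂μ) ^ 2 ≤ μ.real s * ∫ x in s, f x ^ 2 ∂μ := by
  rcases eq_or_ne (μ s) 0 with h0 | h0
  · simp [Measure.restrict_eq_zero.2 h0]
  have hpos : 0 < μ.real s := ENNReal.toReal_pos h0 hs
  have hJensen := even_two.convexOn_pow.map_set_average_le (continuousOn_pow 2) isClosed_univ h0 hs
    (by simp) hf hf2
  simp only [setAverage_eq, smul_eq_mul, mul_pow] at hJensen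
  calc (∫ x in s, f x ∂μ) ^ 2 = μ.real s ^ 2 * ((μ.real s)⁻¹ ^ 2 * (∫ x in s, f x ∂μ) ^ 2) := by
        field_simp
    _ ≤ μ.real s ^ 2 * ((μ.real s)⁻¹ * ∫ x in s, f x ^ 2 ∂μ) := by gcongr
    _ = μ.real s * ∫ x in s, f x ^ 2 ∂μ := by field_simp

theorem norm_sub_sq_le_mul_integral_norm_sq {E : Type*} [NormedAddCommGroup E] [NormedSpace ℝ E]
    [CompleteSpace E] {U U' : ℝ → E} {a b : ℝ} (hab : a ≤ b)
    (hU : ∀ x ∈ Icc a b, HasDerivAt U (U' x) x)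
    (hU' : IntegrableOn (fun x => ‖U' x‖ ^ 2) (Icc a b)) :
    ‖U b - U a‖ ^ 2 ≤ (b - a) * ∫ x in Icc a b, ‖U' x‖ ^ 2 := by
  have hmeas : AEStronglyMeasurable U' (volume.restrict (Icc a b)) :=
    (stronglyMeasurable_deriv U).aestronglyMeasurable.congr <|
      (ae_restrict_mem measurableSet_Icc).mono fun x hx => (hU x hx).deriv
  have hint : IntegrableOn U' (Icc a b) :=
    ((memLp_two_iff_integrable_sq_norm hmeas).2 hU').integrable one_le_two
  have hftc : ∫ x in a..b, U' x = U b - U a :=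
    intervalIntegral.integral_eq_sub_of_hasDerivAt (fun x hx => hU x (uIcc_of_le hab ▸ hx))
      ((intervalIntegrable_iff_integrableOn_Icc_of_le hab).2 hint)
  have hnorm : ‖U b - U a‖ ≤ ∫ x in Icc a b, ‖U' x‖ := by
    rw [← hftc, integral_Icc_eq_integral_Ioc, ← intervalIntegral.integral_of_le hab]
    exact intervalIntegral.norm_integral_le_integral_norm hab
  calc ‖U b - U a‖ ^ 2 ≤ (∫ x in Icc a b, ‖U' x‖) ^ 2 := by gcongr
    _ ≤ volume.real (Icc a b) * ∫ x in Icc a b, ‖U' x‖ ^ 2 :=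
      sq_setIntegral_le_measureReal_mul measure_Icc_lt_top.ne hint.norm hU'
    _ = (b - a) * ∫ x in Icc a b, ‖U' x‖ ^ 2 := by rw [Real.volume_real_Icc_of_le hab]

theorem stmt_5_general {N : ℕ} (W : EuclideanSpace ℝ (Fin N) → ℝ)
    (U U' : ℝ → EuclideanSpace ℝ (Fin N))
    (am ap : EuclideanSpace ℝ (Fin N))
    (hderiv : ∀ x, HasDerivAt U (U' x) x)
    (hU'int : Integrable (fun x => ‖U' x‖ ^ 2))
    (hlimm : Tendsto U atBot (nhds am))
    (hlimp : Tendsto U atTop (nhds ap))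
    (hW : Continuous W) (hWnn : ∀ u, 0 ≤ W u)
    (α : ℝ)
    (Km Kp : Set (EuclideanSpace ℝ (Fin N)))
    (hsub : {u | W u ≤ α} = Km ∪ Kp)
    (ham : am ∈ Km) (hap : ap ∈ Kp)
    (dα : ℝ) (hdα : 0 < dα)
    (hdist : ∀ x ∈ Km, ∀ y ∈ Kp, dα ≤ dist x y)
    (lm lp : ℝ) (hlt : lm < lp)
    (hΛ : {x : ℝ | α ≤ W (U x)} = Set.Icc lm lp)
    (hEint : Integrable (fun x => (1 : ℝ) / 2 * ‖U' x‖ ^ 2 + W (U x))) :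
    dα ^ 2 / (2 * (lp - lm)) + α * (lp - lm) ≤
      ∫ x : ℝ, ((1 : ℝ) / 2 * ‖U' x‖ ^ 2 + W (U x)) := by
  have hL : 0 < lp - lm := sub_pos.2 hlt
  have hU : Continuous U := continuous_iff_continuousAt.2 fun x => (hderiv x).continuousAt
  have hout : MapsTo U (Ioo lm lp)ᶜ (Km ∪ Kp) := fun x hx =>
    hsub ▸ compl_Ioo_subset_of_setOf_le_eq_Icc (hW.comp hU) hΛ hx
  have hUlm : U lm ∈ Km :=
    isPreconnected_Iic.mapsTo_of_tendsto hU.continuousOn hdα hdist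
      (hout.mono_left fun x hx h => not_lt.2 hx h.1) (Iic_mem_atBot lm) hlimm ham self_mem_Iic
  have hUlp : U lp ∈ Kp :=
    isPreconnected_Ici.mapsTo_of_tendsto hU.continuousOn hdα
      (fun x hx y hy => dist_comm x y ▸ hdist y hy x hx)
      (fun x hx => (hout fun h => not_lt.2 hx h.2).symm) (Ici_mem_atTop lp) hlimp hap self_mem_Ici
  have hkin : dα ^ 2 ≤ (lp - lm) * ∫ x in Icc lm lp, ‖U' x‖ ^ 2 :=
    (pow_le_pow_left₀ hdα.le (dist_eq_norm' (U lm) (U lp) ▸ hdist _ hUlm _ hUlp) 2).trans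
      (norm_sub_sq_le_mul_integral_norm_sq hlt.le (fun x _ => hderiv x) hU'int.integrableOn)
  have hWint : IntegrableOn (fun x => W (U x)) (Icc lm lp) := (hW.comp hU).integrableOn_Icc
  have hpot : α * (lp - lm) ≤ ∫ x in Icc lm lp, W (U x) := by
    have := setIntegral_ge_of_const_le_real measurableSet_Icc measure_Icc_lt_top.ne
      (fun x hx => hΛ.ge hx) hWint
    rwa [Real.volume_real_Icc_of_le hlt.le] at this
  calc dα ^ 2 / (2 * (lp - lm)) + α * (lp - lm)
      ≤ 1 / 2 * (∫ x in Icc lm lp, ‖U' x‖ ^ 2) + ∫ x in Icc lm lp, W (U x) := by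
        gcongr
        rw [div_le_iff₀ (by positivity)]
        linarith
    _ = ∫ x in Icc lm lp, (1 / 2 * ‖U' x‖ ^ 2 + W (U x)) := by
        rw [integral_add (hU'int.integrableOn.const_mul _) hWint, integral_const_mul]
    _ ≤ ∫ x, (1 / 2 * ‖U' x‖ ^ 2 + W (U x)) :=
        setIntegral_le_integral hEint (.of_forall fun x => by have := hWnn (U x); positivity)

theorem stmt_5 {N : ℕ} (W : EuclideanSpace ℝ (Fin N) → ℝ)
    (U U' : ℝ → EuclideanSpace ℝ (Fin N))
    (am ap : EuclideanSpace ℝ (Fin N))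
    (hderiv : ∀ x, HasDerivAt U (U' x) x)
    (hU'int : Integrable (fun x => ‖U' x‖ ^ 2))
    (hlimm : Tendsto U atBot (nhds am))
    (hlimp : Tendsto U atTop (nhds ap))
    (hW : Continuous W) (hWnn : ∀ u, 0 ≤ W u)
    (α : ℝ) (hα : 0 < α)
    (Km Kp : Set (EuclideanSpace ℝ (Fin N)))
    (hsub : {u | W u ≤ α} = Km ∪ Kp) (hdisj : Disjoint Km Kp)
    (ham : am ∈ Km) (hap : ap ∈ Kp)
    (dα : ℝ) (hdα : 0 < dα)
    (hdist : ∀ x ∈ Km, ∀ y ∈ Kp, dα ≤ dist x y)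
    (lm lp : ℝ) (hlt : lm < lp)
    (hΛ : {x : ℝ | α ≤ W (U x)} = Set.Icc lm lp)
    (hEint : Integrable (fun x => (1 : ℝ) / 2 * ‖U' x‖ ^ 2 + W (U x))) :
    dα ^ 2 / (2 * (lp - lm)) + α * (lp - lm) ≤
      ∫ x : ℝ, ((1 : ℝ) / 2 * ‖U' x‖ ^ 2 + W (U x)) :=
  stmt_5_general W U U' am ap hderiv hU'int hlimm hlimp hW hWnn α Km Kp hsub ham hap dα hdα hdist lm
    lp hlt hΛ hEint
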